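/- (Romanoff) For any integer a ≥ 2, the series ∑_{n ≥ 1, gcd(n,a)=1} 1/(n · ℓ_a(n)) converges, where ℓ_a(n) is the multiplicative order of a modulo n. -/

import Mathlib

/-!
Romanoff's argument. If `ℓ_a(n) ≤ y` then `n` divides `M_y = ∏_{d ≤ y} (a^d - 1) ≤ 2^(a y²)`, so
`∑_{ℓ_a(n) ≤ y} 1/n ≤ σ(M_y)/M_y ≤ exp (2 ∑_{p ∣ M_y} 1/p)`. For `m ≤ 2^2^t` the primes dividing `m`
give `∑ 1/p ≤ 4 H_t + 1`: Chebyshev's bound `x# ≤ 4^x` controls each dyadic range `[2^j, 2^(j+1))`,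
and there are at most `log₂ m ≤ 2^t` primes above `2^t`. Hence `σ(m)/m ≤ e^10 (t+1)^8` is polynomial
in `log log m`, and the `n` with `ℓ_a(n) ∈ [2^k, 2^(k+1))` contribute `O(k^8 2^(-k))` to the series.
-/

open Finset Real

lemma geom_sum_div_pow_le {x : ℝ} (hx : 1 < x) (e : ℕ) :
    (∑ k ∈ range (e + 1), x ^ k) / x ^ e ≤ x / (x - 1) := by
  have hx1 : 0 < x - 1 := by linarith
  rw [geom_sum_eq hx.ne', div_div, div_le_div_iff₀ (by positivity) hx1, pow_succ]
  nlinarith [pow_pos (by linarith : (0:ℝ) < x) e]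

lemma div_sub_one_le_exp {x : ℝ} (hx : 2 ≤ x) : x / (x - 1) ≤ exp (2 / x) := by
  have hx1 : 0 < x - 1 := by linarith
  calc x / (x - 1) = 1 + 1 / (x - 1) := by field_simp; ring
    _ ≤ 2 / x + 1 := by
      rw [add_comm, add_le_add_iff_right, div_le_div_iff₀ hx1 (by linarith)]
      linarith
    _ ≤ exp (2 / x) := add_one_le_exp _

lemma sum_inv_divisors_le_exp {m : ℕ} (hm : m ≠ 0) :
    ∑ d ∈ m.divisors, (d : ℝ)⁻¹ ≤ exp (2 * ∑ p ∈ m.primeFactors, (p : ℝ)⁻¹) := by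
  have hsigma : ∑ d ∈ m.divisors, (d : ℝ)⁻¹ = (∑ d ∈ m.divisors, (d : ℝ)) / m := by
    rw [← Nat.sum_div_divisors m (fun d => (d : ℝ)⁻¹), sum_div]
    refine sum_congr rfl fun d hd => ?_
    rw [Nat.cast_div (Nat.dvd_of_mem_divisors hd) (by simp [(Nat.pos_of_mem_divisors hd).ne'])]
    simp
  have hm_eq : (m : ℝ) = ∏ p ∈ m.primeFactors, (p : ℝ) ^ m.factorization p := by
    conv_lhs => rw [← Nat.prod_factorization_pow_eq_self hm]
    simp [Finsupp.prod]
  rw [hsigma, ← Nat.cast_sum, Nat.sum_divisors hm, hm_eq, Nat.cast_prod, ← prod_div_distrib,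
    mul_sum, exp_sum]
  refine prod_le_prod (fun p hp => by positivity) fun p hp => ?_
  have hp : (2 : ℝ) ≤ p := by exact_mod_cast (Nat.prime_of_mem_primeFactors hp).two_le
  push_cast
  calc _ ≤ (p : ℝ) / (p - 1) := geom_sum_div_pow_le (by linarith) _
    _ ≤ exp (2 / p) := div_sub_one_le_exp hp
    _ = exp (2 * (p : ℝ)⁻¹) := by rw [div_eq_mul_inv]

lemma card_mul_le_of_log_eq {s : Finset ℕ} {j : ℕ} (hs : ∀ p ∈ s, p.Prime ∧ Nat.log 2 p = j) :
    #s * j ≤ 2 ^ (j + 2) := by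
  have hsub : s ⊆ filter Nat.Prime (range (2 ^ (j + 1) + 1)) := fun p hp => by
    obtain ⟨hp, rfl⟩ := hs p hp
    have := Nat.lt_pow_succ_log_self one_lt_two p
    simp only [mem_filter, mem_range]
    exact ⟨by omega, hp⟩
  have h : 2 ^ (j * #s) ≤ 2 ^ 2 ^ (j + 2) :=
    calc 2 ^ (j * #s) = (2 ^ j) ^ #s := pow_mul _ _ _
      _ ≤ ∏ p ∈ s, p := pow_card_le_prod _ _ _ fun p hp => by
          obtain ⟨hp, rfl⟩ := hs p hp
          exact Nat.pow_log_le_self 2 hp.ne_zero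
      _ ≤ primorial (2 ^ (j + 1)) :=
          Nat.le_of_dvd (primorial_pos _) (prod_dvd_prod_of_subset _ _ _ hsub)
      _ ≤ 4 ^ 2 ^ (j + 1) := primorial_le_four_pow _
      _ = 2 ^ 2 ^ (j + 2) := by rw [show 4 = 2 ^ 2 by rfl, ← pow_mul, pow_succ _ (j + 1), mul_comm]
  rw [mul_comm]
  exact (Nat.pow_le_pow_iff_right one_lt_two).mp h

lemma sum_inv_le_of_log_eq {s : Finset ℕ} {j : ℕ} (hj : j ≠ 0)
    (hs : ∀ p ∈ s, p.Prime ∧ Nat.log 2 p = j) : ∑ p ∈ s, (p : ℝ)⁻¹ ≤ 4 / j := by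
  have hcard : (#s : ℝ) * j ≤ 4 * 2 ^ j := by
    exact_mod_cast (card_mul_le_of_log_eq hs).trans_eq (by ring)
  calc ∑ p ∈ s, (p : ℝ)⁻¹ ≤ ∑ _p ∈ s, ((2 : ℝ) ^ j)⁻¹ := sum_le_sum fun p hp => by
        obtain ⟨hp, rfl⟩ := hs p hp
        exact inv_anti₀ (by positivity) (by exact_mod_cast Nat.pow_log_le_self 2 hp.ne_zero)
    _ = #s / 2 ^ j := by rw [sum_const, nsmul_eq_mul, div_eq_mul_inv]
    _ ≤ 4 / j := by
      rw [div_le_div_iff₀ (by positivity) (by positivity)]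
      linarith

lemma sum_inv_primes_le_harmonic {s : Finset ℕ} {t : ℕ} (hs : ∀ p ∈ s, p.Prime ∧ p ≤ 2 ^ t) :
    ∑ p ∈ s, (p : ℝ)⁻¹ ≤ 4 * harmonic t := by
  have hmaps : ∀ p ∈ s, Nat.log 2 p ∈ Icc 1 t := fun p hp => by
    obtain ⟨hp, hpt⟩ := hs p hp
    simp only [mem_Icc]
    exact ⟨Nat.log_pos one_lt_two hp.two_le, (Nat.log_mono_right hpt).trans_eq (Nat.log_pow one_lt_two t)⟩
  rw [← sum_fiberwise_of_maps_to hmaps, harmonic_eq_sum_Icc, Rat.cast_sum, mul_sum]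
  refine sum_le_sum fun j hj => ?_
  push_cast
  rw [← div_eq_mul_inv]
  exact sum_inv_le_of_log_eq (by simp at hj; omega) fun p hp => by
    simp only [mem_filter] at hp
    exact ⟨(hs p hp.1).1, hp.2⟩

lemma two_pow_card_primeFactors_le {m : ℕ} (hm : m ≠ 0) : 2 ^ #m.primeFactors ≤ m :=
  calc 2 ^ #m.primeFactors ≤ ∏ p ∈ m.primeFactors, p :=
        pow_card_le_prod _ _ _ fun _ hp => (Nat.prime_of_mem_primeFactors hp).two_le
    _ ≤ m := Nat.le_of_dvd (Nat.pos_of_ne_zero hm) (Nat.prod_primeFactors_dvd m)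

lemma sum_inv_primeFactors_le {m t : ℕ} (hm : m ≠ 0) (hmt : m ≤ 2 ^ 2 ^ t) :
    ∑ p ∈ m.primeFactors, (p : ℝ)⁻¹ ≤ 4 * harmonic t + 1 := by
  rw [← sum_filter_add_sum_filter_not _ (· ≤ 2 ^ t)]
  have hsmall : ∑ p ∈ m.primeFactors with p ≤ 2 ^ t, (p : ℝ)⁻¹ ≤ 4 * harmonic t :=
    sum_inv_primes_le_harmonic fun p hp => by
      simp only [mem_filter] at hp
      exact ⟨Nat.prime_of_mem_primeFactors hp.1, hp.2⟩
  have hcard : #m.primeFactors ≤ 2 ^ t :=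
    (Nat.pow_le_pow_iff_right one_lt_two).mp ((two_pow_card_primeFactors_le hm).trans hmt)
  have hlarge : ∑ p ∈ m.primeFactors with ¬p ≤ 2 ^ t, (p : ℝ)⁻¹ ≤ 1 :=
    calc _ ≤ ∑ p ∈ m.primeFactors with ¬p ≤ 2 ^ t, ((2 : ℝ) ^ t)⁻¹ := sum_le_sum fun p hp => by
          simp only [mem_filter, not_le] at hp
          exact inv_anti₀ (by positivity) (by exact_mod_cast hp.2.le)
      _ ≤ #m.primeFactors * ((2 : ℝ) ^ t)⁻¹ := by
          rw [sum_const, nsmul_eq_mul]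
          gcongr
          exact filter_subset _ _
      _ ≤ 1 := by
          rw [← div_eq_mul_inv, div_le_one (by positivity)]
          exact_mod_cast hcard
  linarith

lemma sum_inv_divisors_le {m t : ℕ} (hm : m ≠ 0) (hmt : m ≤ 2 ^ 2 ^ t) :
    ∑ d ∈ m.divisors, (d : ℝ)⁻¹ ≤ exp 10 * (t + 1) ^ 8 := by
  have hharm : (harmonic t : ℝ) ≤ 1 + log (t + 1) := by
    calc (harmonic t : ℝ) ≤ harmonic (t + 1) := by
          rw [harmonic_succ]
          push_cast
          exact le_add_of_nonneg_right (by positivity)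
      _ ≤ 1 + log (t + 1) := by exact_mod_cast harmonic_le_one_add_log (t + 1)
  calc ∑ d ∈ m.divisors, (d : ℝ)⁻¹ ≤ exp (2 * ∑ p ∈ m.primeFactors, (p : ℝ)⁻¹) :=
        sum_inv_divisors_le_exp hm
    _ ≤ exp (10 + 8 * log (t + 1)) := by
        gcongr
        linarith [sum_inv_primeFactors_le hm hmt]
    _ = exp 10 * (t + 1) ^ 8 := by
        rw [exp_add, show (8 : ℝ) = (8 : ℕ) by norm_num, exp_nat_mul, exp_log (by positivity)]

lemma dvd_pow_orderOf_sub_one (a n : ℕ) : n ∣ a ^ orderOf (a : ZMod n) - 1 := by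
  rcases Nat.eq_zero_or_pos (a ^ orderOf (a : ZMod n)) with h | h
  · simp [h]
  rw [← ZMod.natCast_eq_zero_iff, Nat.cast_sub h, Nat.cast_pow, pow_orderOf_eq_one, Nat.cast_one,
    sub_self]

lemma dvd_prod_pow_sub_one {a n y : ℕ} (h0 : orderOf (a : ZMod n) ≠ 0)
    (hy : orderOf (a : ZMod n) ≤ y) : n ∣ ∏ d ∈ Icc 1 y, (a ^ d - 1) :=
  (dvd_pow_orderOf_sub_one a n).trans <| dvd_prod_of_mem _ <| mem_Icc.mpr ⟨Nat.pos_of_ne_zero h0, hy⟩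

lemma prod_pow_sub_one_ne_zero {a : ℕ} (ha : 2 ≤ a) (y : ℕ) : ∏ d ∈ Icc 1 y, (a ^ d - 1) ≠ 0 :=
  prod_ne_zero_iff.mpr fun d hd => by
    have := Nat.le_self_pow (by simp at hd; omega : d ≠ 0) a
    omega

lemma prod_pow_sub_one_le_two_pow_two_pow {a : ℕ} (ha : 0 < a) (k : ℕ) :
    ∏ d ∈ Icc 1 (2 ^ (k + 1)), (a ^ d - 1) ≤ 2 ^ 2 ^ (a + 2 * k + 2) := by
  set y := 2 ^ (k + 1)
  calc ∏ d ∈ Icc 1 y, (a ^ d - 1) ≤ ∏ _d ∈ Icc 1 y, a ^ y :=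
        prod_le_prod' fun d hd => (Nat.sub_le _ _).trans (Nat.pow_le_pow_right ha (mem_Icc.mp hd).2)
    _ = a ^ (y * y) := by rw [prod_const, Nat.card_Icc, Nat.add_sub_cancel, ← pow_mul]
    _ ≤ (2 ^ a) ^ (y * y) := Nat.pow_le_pow_left Nat.lt_two_pow_self.le _
    _ ≤ 2 ^ (2 ^ a * (y * y)) := by
        rw [← pow_mul]
        exact Nat.pow_le_pow_right two_pos (Nat.mul_le_mul_right _ Nat.lt_two_pow_self.le)
    _ = 2 ^ 2 ^ (a + 2 * k + 2) := by rw [← pow_add, ← pow_add]; ring_nf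

lemma summable_of_sum_fiber_le {α β : Type*} {g : α → ℝ} (hg : 0 ≤ g) (φ : α → β) {B : β → ℝ}
    (hB : Summable B) (h : ∀ b (s : Finset α), (∀ x ∈ s, φ x = b) → ∑ x ∈ s, g x ≤ B b) :
    Summable g := by
  classical
  have hB0 : 0 ≤ B := fun b => by simpa using h b ∅ (by simp)
  refine summable_of_sum_le (c := ∑' b, B b) hg fun u => ?_
  calc ∑ x ∈ u, g x = ∑ b ∈ u.image φ, ∑ x ∈ u with φ x = b, g x :=
        (sum_fiberwise_of_maps_to (fun x hx => mem_image_of_mem φ hx) g).symm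
    _ ≤ ∑ b ∈ u.image φ, B b := sum_le_sum fun b _ => h b _ fun x hx => (mem_filter.mp hx).2
    _ ≤ ∑' b, B b := hB.sum_le_tsum _ fun b _ => hB0 b

lemma summable_succ_pow_mul_inv_two_pow (r : ℕ) :
    Summable fun k : ℕ => ((k : ℝ) + 1) ^ r * 2⁻¹ ^ k := by
  have h := (summable_nat_add_iff 1).mpr
    (summable_pow_mul_geometric_of_norm_lt_one r (r := (2⁻¹ : ℝ)) (by norm_num))
  refine (h.mul_left 2).congr fun k => ?_
  push_cast
  ring

lemma sum_one_div_mul_orderOf_le {a : ℕ} (ha : 2 ≤ a) {k : ℕ} {s : Finset ℕ}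
    (hs : ∀ n ∈ s, Nat.log 2 (orderOf (a : ZMod n)) = k) :
    ∑ n ∈ s, 1 / ((n : ℝ) * orderOf (a : ZMod n)) ≤
      exp 10 * (a + 3) ^ 8 * ((k + 1) ^ 8 * 2⁻¹ ^ k) := by
  set g : ℕ → ℝ := fun n => 1 / ((n : ℝ) * orderOf (a : ZMod n)) with hg
  set M := ∏ d ∈ Icc 1 (2 ^ (k + 1)), (a ^ d - 1)
  have hM0 : M ≠ 0 := prod_pow_sub_one_ne_zero ha _
  have hterm : ∀ n ∈ s, g n ≠ 0 → n ∈ M.divisors ∧ g n ≤ 2⁻¹ ^ k * (n : ℝ)⁻¹ := by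
    intro n hn hne
    have hℓ : orderOf (a : ZMod n) ≠ 0 := fun h => hne (by simp [hg, h])
    have hlow := Nat.pow_log_le_self 2 hℓ
    have hhigh := Nat.lt_pow_succ_log_self one_lt_two (orderOf (a : ZMod n))
    rw [hs n hn] at hlow hhigh
    refine ⟨Nat.mem_divisors.mpr ⟨dvd_prod_pow_sub_one hℓ hhigh.le, hM0⟩, ?_⟩
    simp only [hg]
    rw [one_div, mul_inv_rev, inv_pow]
    gcongr
    exact_mod_cast hlow
  have hfactor : ((a + 2 * k + 2 : ℕ) : ℝ) + 1 ≤ (a + 3) * (k + 1) := by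
    push_cast
    nlinarith [(a * k).cast_nonneg (α := ℝ)]
  calc ∑ n ∈ s, g n = ∑ n ∈ s with g n ≠ 0, g n := (sum_filter_ne_zero _).symm
    _ ≤ ∑ n ∈ s with g n ≠ 0, 2⁻¹ ^ k * (n : ℝ)⁻¹ :=
        sum_le_sum fun n hn => (hterm n (mem_filter.mp hn).1 (mem_filter.mp hn).2).2
    _ ≤ ∑ n ∈ M.divisors, 2⁻¹ ^ k * (n : ℝ)⁻¹ :=
        sum_le_sum_of_subset_of_nonneg
          (fun n hn => (hterm n (mem_filter.mp hn).1 (mem_filter.mp hn).2).1)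
          fun _ _ _ => by positivity
    _ = 2⁻¹ ^ k * ∑ n ∈ M.divisors, (n : ℝ)⁻¹ := (mul_sum _ _ _).symm
    _ ≤ 2⁻¹ ^ k * (exp 10 * (((a + 2 * k + 2 : ℕ) : ℝ) + 1) ^ 8) := by
        gcongr
        exact sum_inv_divisors_le hM0 (prod_pow_sub_one_le_two_pow_two_pow (by omega) k)
    _ ≤ 2⁻¹ ^ k * (exp 10 * ((a + 3) * (k + 1)) ^ 8) := by gcongr
    _ = exp 10 * (a + 3) ^ 8 * ((k + 1) ^ 8 * 2⁻¹ ^ k) := by ring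

-- For `n` not coprime to `a` the order is `0`, so the term is the junk value `1 / 0 = 0`.
theorem summable_one_div_mul_orderOf {a : ℕ} (ha : 2 ≤ a) :
    Summable fun n : ℕ => 1 / ((n : ℝ) * orderOf (a : ZMod n)) :=
  summable_of_sum_fiber_le (fun n => by positivity) (fun n => Nat.log 2 (orderOf (a : ZMod n)))
    ((summable_succ_pow_mul_inv_two_pow 8).mul_left _) fun _ _ hs => sum_one_div_mul_orderOf_le ha hs

theorem stmt_14 (a : ℕ) (ha : 2 ≤ a) :
    Summable (fun n : ℕ =>
      if 0 < n ∧ Nat.Coprime n a then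
        (1 : ℝ) / ((n : ℝ) * orderOf (a : ZMod n))
      else 0) :=
  (summable_one_div_mul_orderOf ha).of_nonneg_of_le (fun n => by split_ifs <;> positivity)
    fun n => by split_ifs; exacts [le_rfl, by positivity]
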